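/- Let Σ be a d×d positive semidefinite matrix with eigenvalues σ₁ ≥ ⋯ ≥ σ_d > 0, let n be a positive integer with Tr(Σ(Σ + λ⋆I)⁻¹) ≤ n for some λ⋆ > 0, and let k⋆ = max{k : σ_k ≥ λ⋆}. Then k⋆ + (1/σ_{k⋆}) ∑_{ℓ > k⋆} σ_ℓ ≤ 2n. -/

import Mathlib

open Matrix Finset

/-!
Each term of `∑ σᵢ / (σᵢ + λ⋆)` with `i ≤ k⋆` has `σᵢ ≥ λ⋆` and so is at least `1/2`, while each
term with `i > k⋆` has denominator `σᵢ + λ⋆ ≤ 2 σ_{k⋆}`, hence is at least `σᵢ / (2 σ_{k⋆})`.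
Adding the two bounds gives `(k⋆ + 1)/2 + (∑_{ℓ>k⋆} σ_ℓ) / (2 σ_{k⋆}) ≤ n`.
-/

lemma half_le_div_add_of_le {s lam : ℝ} (hlam : 0 < lam) (h : lam ≤ s) :
    1 / 2 ≤ s / (s + lam) := by
  rw [le_div_iff₀ (by linarith)]
  linarith

lemma div_two_mul_le_div_add {s lam c : ℝ} (hs : 0 ≤ s) (hlam : 0 < lam) (hsc : s ≤ c)
    (hlc : lam ≤ c) : s / (2 * c) ≤ s / (s + lam) :=
  div_le_div_of_nonneg_left hs (by linarith) (by linarith)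

section RegularizedTrace

variable {ι : Type*} (s : Finset ι) (σ : ι → ℝ) {lam : ℝ}

lemma card_div_two_le_sum_div_add (hlam : 0 < lam) (h : ∀ i ∈ s, lam ≤ σ i) :
    (#s : ℝ) / 2 ≤ ∑ i ∈ s, σ i / (σ i + lam) := by
  have := s.card_nsmul_le_sum _ _ fun i hi => half_le_div_add_of_le hlam (h i hi)
  rw [nsmul_eq_mul] at this
  linarith

lemma sum_div_two_mul_le_sum_div_add {c : ℝ} (hlam : 0 < lam) (hlc : lam ≤ c)
    (h : ∀ i ∈ s, 0 ≤ σ i ∧ σ i ≤ c) :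
    (∑ i ∈ s, σ i) / (2 * c) ≤ ∑ i ∈ s, σ i / (σ i + lam) := by
  rw [sum_div]
  exact sum_le_sum fun i hi => div_two_mul_le_div_add (h i hi).1 hlam (h i hi).2 hlc

end RegularizedTrace

lemma sum_Iic_add_sum_Ioi {ι : Type*} [Fintype ι] [LinearOrder ι]
    [LocallyFiniteOrderBot ι] [LocallyFiniteOrderTop ι]
    (f : ι → ℝ) (k : ι) : ∑ i ∈ Iic k, f i + ∑ i ∈ Ioi k, f i = ∑ i, f i := by
  rw [← sum_filter_add_sum_filter_not univ (· ≤ k)]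
  congr 2 <;> ext <;> simp

/-- Indices are 0-based, so `kstar + 1` counts the indices `j ≤ kstar`. -/
theorem stmt1 {d : ℕ} (σ : Fin d → ℝ) (hpos : ∀ i, 0 < σ i)
    (hmono : ∀ i j : Fin d, i ≤ j → σ j ≤ σ i)
    (lam : ℝ) (hlam : 0 < lam) (n : ℕ)
    (htrace : ∑ i, σ i / (σ i + lam) ≤ (n : ℝ))
    (kstar : Fin d) (hk1 : lam ≤ σ kstar) :
    ((kstar : ℕ) : ℝ) + 1 +
        (∑ j ∈ Finset.univ.filter (fun j => kstar < j), σ j) / σ kstar ≤ 2 * n := by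
  have hhead := card_div_two_le_sum_div_add (Iic kstar) σ hlam
    fun i hi => hk1.trans (hmono _ _ (mem_Iic.1 hi))
  have htail := sum_div_two_mul_le_sum_div_add (Ioi kstar) σ hlam hk1
    fun i hi => ⟨(hpos i).le, hmono _ _ (mem_Ioi.1 hi).le⟩
  have hsplit := sum_Iic_add_sum_Ioi (fun i => σ i / (σ i + lam)) kstar
  rw [Fin.card_Iic, Nat.cast_add, Nat.cast_one] at hhead
  rw [mul_comm, div_mul_eq_div_div] at htail
  rw [filter_lt_eq_Ioi]
  linarith
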